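/- arXiv:2006.11334 — 2 statements merged into one kernel-verified Lean document; each statement's English description precedes it below -/
import Mathlib

section
/- Let G be a simple graph on a countable vertex set, and let W1 and W2 be disjoint independent subgraphs of G (i.e., disjoint vertex sets each inducing an independent subgraph). Then W1 ∪ W2 is an independent subgraph of G. -/
namespace PaperMatchings

variable {V : Type*}

/-- The support of a set of edges: all vertices incident to some edge in `M`. -/
def supp (M : Set (Sym2 V)) : Set V := {v | ∃ e ∈ M, v ∈ e}

/-- `M` is a matching of `G`: a set of edges of `G` such that no vertex is
incident to more than one edge of `M`. -/
def IsMatching (G : SimpleGraph V) (M : Set (Sym2 V)) : Prop :=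
  M ⊆ G.edgeSet ∧ ∀ (v : V), ∀ e ∈ M, ∀ e' ∈ M, v ∈ e → v ∈ e' → e = e'

/-- A perfect matching: a matching whose support is all of `V`. -/
def IsPerfectMatching (G : SimpleGraph V) (M : Set (Sym2 V)) : Prop :=
  IsMatching G M ∧ supp M = Set.univ

/-- A (finite or infinite) path in `G`, given by its number of vertices `n : ℕ∞`
(`⊤` meaning infinite) and the enumeration `f` of its vertices: it is injective on
indices below `n` and consecutive vertices are adjacent. -/
def IsPath (G : SimpleGraph V) (n : ℕ∞) (f : ℕ → V) : Prop :=
  1 ≤ n ∧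
  (∀ i j : ℕ, (i : ℕ∞) < n → (j : ℕ∞) < n → f i = f j → i = j) ∧
  (∀ i : ℕ, ((i : ℕ∞) + 1) < n → G.Adj (f i) (f (i + 1)))

/-- The consecutive edges of the path lie alternately in `M` and outside `M`. -/
def IsAlternating (M : Set (Sym2 V)) (n : ℕ∞) (f : ℕ → V) : Prop :=
  ∀ i : ℕ, ((i : ℕ∞) + 2) < n →
    (s(f i, f (i + 1)) ∈ M ↔ s(f (i + 1), f (i + 2)) ∉ M)

/-- An `M`-augmenting path starting at `s`: an `M`-alternating path (with at least one
edge) starting at the unmatched vertex `s`, which is either infinite or ends at an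
unmatched vertex. -/
def IsAugmentingPath (G : SimpleGraph V) (M : Set (Sym2 V)) (n : ℕ∞) (f : ℕ → V)
    (s : V) : Prop :=
  IsPath G n f ∧ IsAlternating M n f ∧ 1 < n ∧ f 0 = s ∧ s ∉ supp M ∧
  ∀ k : ℕ, n = (k : ℕ∞) + 1 → f k ∉ supp M

/-- The path contains at least one edge of `M`. -/
def IsProper (M : Set (Sym2 V)) (n : ℕ∞) (f : ℕ → V) : Prop :=
  ∃ i : ℕ, ((i : ℕ∞) + 1) < n ∧ s(f i, f (i + 1)) ∈ M

/-- Condition (A): for every matching `M` and every vertex `s` not in the support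
of `M` there is an `M`-augmenting path starting at `s`. -/
def ConditionA (G : SimpleGraph V) : Prop :=
  ∀ M : Set (Sym2 V), IsMatching G M → ∀ s : V, s ∉ supp M →
    ∃ (n : ℕ∞) (f : ℕ → V), IsAugmentingPath G M n f s

/-- An independent matching: a matching admitting no proper augmenting path. -/
def IndepMatching (G : SimpleGraph V) (M : Set (Sym2 V)) : Prop :=
  IsMatching G M ∧
    ¬ ∃ (s : V) (n : ℕ∞) (f : ℕ → V), IsAugmentingPath G M n f s ∧ IsProper M n f

/-- The induced subgraph of `G` on the vertex set `S` (vertices outside `S`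
become isolated). -/
def restrict (G : SimpleGraph V) (S : Set V) : SimpleGraph V where
  Adj u v := G.Adj u v ∧ u ∈ S ∧ v ∈ S
  symm := by
    constructor
    intro u v h
    exact ⟨h.1.symm, h.2.2, h.2.1⟩
  loopless := by
    constructor
    intro v h
    exact G.irrefl h.1

/-- `W` is an independent subgraph of `G`: the induced subgraph `G[W]` has a perfect
matching (i.e. `G` has a matching with support exactly `W`) and every such matching
is an independent matching of `G`. -/
def IndepSubgraph (G : SimpleGraph V) (W : Set V) : Prop :=
  (∃ M, IsMatching G M ∧ supp M = W) ∧
  ∀ M, IsMatching G M → supp M = W → IndepMatching G M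

/-- The induced subgraph `G[W]` satisfies condition (A): for every matching of
`G[W]` and every vertex of `W` not in its support, there is an augmenting path
inside `G[W]`. -/
def ConditionAOn (G : SimpleGraph V) (W : Set V) : Prop :=
  ∀ M : Set (Sym2 V), IsMatching (restrict G W) M → ∀ s ∈ W, s ∉ supp M →
    ∃ (n : ℕ∞) (f : ℕ → V), IsAugmentingPath (restrict G W) M n f s


/-!
Two facts combine. First, if `A` and `B` are independent matchings with disjoint supports, so
is `A ∪ B`: a proper augmenting path of `A ∪ B` has its second edge in, say, `A`, and cutting it
just before its first `B`-edge leaves a proper `A`-augmenting path, since that vertex is matched by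
`B` and hence unmatched by `A`.

Second, independence only depends on the support. Let `supp M = supp M'` and let `P` be a proper
`M`-augmenting path from `s`. Then `N = M ∆ E(P)` is a matching covering `supp M'` and `s`.
Following alternately `N`- and `M'`-edges from `s` never revisits a vertex, because stepping back
is again taking partners and `s` is unmatched by `M'`; the walk can only stop at a vertex unmatched
by `M'`, so it is a proper `M'`-augmenting path.
-/

open scoped symmDiff

lemma natCast_lt_of_le {i j : ℕ} {n : ℕ∞} (h : i ≤ j) (hj : (j : ℕ∞) < n) : (i : ℕ∞) < n :=
  (Nat.cast_le.2 h).trans_lt hj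

lemma natCast_add_one_lt_of_lt {i j : ℕ} {n : ℕ∞} (h : i < j) (hj : (j : ℕ∞) < n) :
    (i : ℕ∞) + 1 < n := by
  exact_mod_cast natCast_lt_of_le h hj

lemma mem_supp_iff {M : Set (Sym2 V)} {v : V} : v ∈ supp M ↔ ∃ w, s(v, w) ∈ M := by
  constructor
  · rintro ⟨e, he, hv⟩
    induction e with
    | h a b =>
      rcases Sym2.mem_iff.1 hv with rfl | rfl
      · exact ⟨b, he⟩
      · exact ⟨a, Sym2.eq_swap ▸ he⟩
  · rintro ⟨w, hw⟩
    exact ⟨s(v, w), hw, Sym2.mem_mk_left _ _⟩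

lemma supp_union (M M' : Set (Sym2 V)) : supp (M ∪ M') = supp M ∪ supp M' :=
  Set.ext fun v => by
    simp only [supp, Set.mem_union, Set.mem_ofPred_eq, or_and_right, exists_or]

namespace IsMatching

variable {G : SimpleGraph V} {M M' : Set (Sym2 V)} {u v w : V}

lemma eq_of_mem_of_mem (hM : IsMatching G M) (h : s(u, v) ∈ M) (h' : s(u, w) ∈ M) : v = w :=
  Sym2.congr_right.1 (hM.2 u _ h _ h' (Sym2.mem_mk_left _ _) (Sym2.mem_mk_left _ _))

lemma ne_of_mem (hM : IsMatching G M) (h : s(u, v) ∈ M) : u ≠ v :=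
  G.ne_of_adj (hM.1 h)

lemma union (hM : IsMatching G M) (hM' : IsMatching G M') (hd : Disjoint (supp M) (supp M')) :
    IsMatching G (M ∪ M') := by
  refine ⟨Set.union_subset hM.1 hM'.1, ?_⟩
  rintro v e (he | he) e' (he' | he') hv hv'
  · exact hM.2 v e he e' he' hv hv'
  · exact (Set.disjoint_left.1 hd ⟨e, he, hv⟩ ⟨e', he', hv'⟩).elim
  · exact (Set.disjoint_left.1 hd ⟨e', he', hv'⟩ ⟨e, he, hv⟩).elim
  · exact hM'.2 v e he e' he' hv hv'

end IsMatching

open Classical in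
noncomputable def partner (M : Set (Sym2 V)) (v : V) : V :=
  if h : ∃ w, s(v, w) ∈ M then h.choose else v

lemma partner_mem {M : Set (Sym2 V)} {v : V} (h : v ∈ supp M) : s(v, partner M v) ∈ M := by
  rw [mem_supp_iff] at h
  rw [partner, dif_pos h]
  exact h.choose_spec

lemma IsMatching.partner_eq {G : SimpleGraph V} {M : Set (Sym2 V)} (hM : IsMatching G M)
    {v w : V} (h : s(v, w) ∈ M) : partner M v = w :=
  hM.eq_of_mem_of_mem (partner_mem ⟨_, h, Sym2.mem_mk_left _ _⟩) h

namespace IsPath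

variable {G : SimpleGraph V} {n n' : ℕ∞} {f : ℕ → V}

lemma mono (hp : IsPath G n f) (h1 : 1 ≤ n') (h : n' ≤ n) : IsPath G n' f :=
  ⟨h1, fun i j hi hj => hp.2.1 i j (hi.trans_le h) (hj.trans_le h),
    fun i hi => hp.2.2 i (hi.trans_le h)⟩

lemma eq_or_succ_of_edges_meet (hp : IsPath G n f) {a b : ℕ} {v : V}
    (ha : (a : ℕ∞) + 1 < n) (hb : (b : ℕ∞) + 1 < n)
    (hva : v ∈ s(f a, f (a + 1))) (hvb : v ∈ s(f b, f (b + 1))) :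
    a = b ∨ a = b + 1 ∨ b = a + 1 := by
  have ha1 : ((a + 1 : ℕ) : ℕ∞) < n := by exact_mod_cast ha
  have hb1 : ((b + 1 : ℕ) : ℕ∞) < n := by exact_mod_cast hb
  have ha0 := natCast_lt_of_le a.le_succ ha1
  have hb0 := natCast_lt_of_le b.le_succ hb1
  rcases Sym2.mem_iff.1 hva with rfl | rfl <;> rcases Sym2.mem_iff.1 hvb with h | h
  · exact .inl (hp.2.1 _ _ ha0 hb0 h)
  · have := hp.2.1 _ _ ha0 hb1 h; omega
  · have := hp.2.1 _ _ ha1 hb0 h; omega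
  · have := hp.2.1 _ _ ha1 hb1 h; omega

end IsPath

lemma isAugmentingPath_of_parity {G : SimpleGraph V} {M : Set (Sym2 V)} {n : ℕ∞} {f : ℕ → V}
    (hp : IsPath G n f) (hn : 1 < n) (h0 : f 0 ∉ supp M)
    (hend : ∀ k : ℕ, n = (k : ℕ∞) + 1 → f k ∉ supp M)
    (hpar : ∀ i : ℕ, (i : ℕ∞) + 1 < n → (s(f i, f (i + 1)) ∈ M ↔ Odd i)) :
    IsAugmentingPath G M n f (f 0) := by
  refine ⟨hp, fun i hi => ?_, hn, rfl, h0, hend⟩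
  have hi1 : (i : ℕ∞) + 1 < n := lt_of_le_of_lt (by gcongr; norm_num) hi
  have hi2 : ((i + 1 : ℕ) : ℕ∞) + 1 < n := by
    push_cast; rwa [add_assoc, one_add_one_eq_two]
  rw [hpar i hi1, hpar (i + 1) hi2, Nat.odd_add_one, not_not]

namespace IsAugmentingPath

variable {G : SimpleGraph V} {M : Set (Sym2 V)} {n : ℕ∞} {f : ℕ → V} {s : V}

lemma mem_iff_odd (haug : IsAugmentingPath G M n f s) :
    ∀ i : ℕ, (i : ℕ∞) + 1 < n → (s(f i, f (i + 1)) ∈ M ↔ Odd i) := by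
  obtain ⟨-, halt, -, rfl, hs, -⟩ := haug
  intro i
  induction i with
  | zero => exact fun _ => iff_of_false (fun h => hs ⟨_, h, Sym2.mem_mk_left _ _⟩) (by decide)
  | succ i ih =>
    intro h
    have h2 : (i : ℕ∞) + 2 < n := by
      rwa [Nat.cast_succ, add_assoc, one_add_one_eq_two] at h
    rw [Nat.odd_add_one, ← ih (lt_of_le_of_lt (by gcongr; norm_num) h2)]
    exact (not_iff_comm.1 (halt i h2).symm).symm

lemma mem_one_two (haug : IsAugmentingPath G M n f s) (h2 : 2 < n) : s(f 1, f 2) ∈ M :=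
  (haug.mem_iff_odd 1 (by rwa [Nat.cast_one, one_add_one_eq_two])).2 odd_one

lemma isProper_iff (haug : IsAugmentingPath G M n f s) : IsProper M n f ↔ 2 < n := by
  refine ⟨fun ⟨i, hi, hiM⟩ => ?_, fun h2 => ⟨1, by rwa [Nat.cast_one, one_add_one_eq_two],
    haug.mem_one_two h2⟩⟩
  have := ((haug.mem_iff_odd i hi).1 hiM).pos
  exact lt_of_le_of_lt (by exact_mod_cast Nat.succ_le_succ this) hi

lemma add_one_lt_of_mem_supp (haug : IsAugmentingPath G M n f s) {j : ℕ}
    (hj : (j : ℕ∞) < n) (hv : f j ∈ supp M) : (j : ℕ∞) + 1 < n := by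
  have ⟨_, _, _, _, _, hend⟩ := haug
  by_contra h
  exact hend j (le_antisymm (not_lt.1 h) (ENat.natCast_add_one_le_iff.2 hj)) hv

end IsAugmentingPath

section Union

variable {G : SimpleGraph V} {A B : Set (Sym2 V)} {n : ℕ∞} {f : ℕ → V} {s : V}

theorem IsAugmentingPath.exists_isProper_left_of_union (haug : IsAugmentingPath G (A ∪ B) n f s)
    (hd : Disjoint (supp A) (supp B)) (h2 : 2 < n) (h1 : s(f 1, f 2) ∈ A) :
    ∃ n', IsAugmentingPath G A n' f s ∧ IsProper A n' f := by
  have hpar := haug.mem_iff_odd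
  obtain ⟨hp, -, hn, rfl, hs, hend⟩ := haug
  have hsA : f 0 ∉ supp A := fun h => hs (supp_union A B ▸ Or.inl h)
  have hparA : ∀ i : ℕ, (i : ℕ∞) + 1 < n → s(f i, f (i + 1)) ∉ B →
      (s(f i, f (i + 1)) ∈ A ↔ Odd i) := fun i hi hB => by
    rw [← hpar i hi, Set.mem_union, or_iff_left hB]
  by_cases H : ∃ k : ℕ, (k : ℕ∞) + 1 < n ∧ s(f k, f (k + 1)) ∈ B
  · -- cut the path at its first `B`-edge
    classical
    obtain ⟨hkn, hkB⟩ := Nat.find_spec H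
    set k := Nat.find H
    have hk0 : k ≠ 0 := fun h => hs ⟨_, Or.inr (h ▸ hkB), Sym2.mem_mk_left _ _⟩
    have hk1 : k ≠ 1 := fun h =>
      Set.disjoint_left.1 hd ⟨_, h1, Sym2.mem_mk_left _ _⟩ ⟨_, h ▸ hkB, Sym2.mem_mk_left _ _⟩
    have hk2 : (2 : ℕ∞) < k + 1 := by exact_mod_cast (by omega : 2 < k + 1)
    have haugA : IsAugmentingPath G A (k + 1) f (f 0) := by
      refine isAugmentingPath_of_parity (hp.mono le_add_self hkn.le)
        (lt_trans (by norm_num) hk2) hsA (fun j hj => ?_) (fun i hi => ?_)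
      · obtain rfl : j = k := by
          have : k + 1 = j + 1 := by exact_mod_cast hj
          omega
        exact Set.disjoint_right.1 hd ⟨_, hkB, Sym2.mem_mk_left _ _⟩
      · have hik : i + 1 < k + 1 := by exact_mod_cast hi
        replace hik : i < k := by omega
        exact hparA i (hi.trans hkn) fun hB => Nat.find_min H hik ⟨hi.trans hkn, hB⟩
    exact ⟨k + 1, haugA, haugA.isProper_iff.2 hk2⟩
  · push Not at H
    have haugA : IsAugmentingPath G A n f (f 0) :=
      isAugmentingPath_of_parity hp hn hsA
        (fun k hk h => hend k hk (supp_union A B ▸ Or.inl h)) fun i hi => hparA i hi (H i hi)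
    exact ⟨n, haugA, haugA.isProper_iff.2 h2⟩

theorem IndepMatching.union (hA : IndepMatching G A) (hB : IndepMatching G B)
    (hd : Disjoint (supp A) (supp B)) : IndepMatching G (A ∪ B) := by
  refine ⟨hA.1.union hB.1 hd, fun ⟨s, n, f, haug, hprop⟩ => ?_⟩
  have h2 := haug.isProper_iff.1 hprop
  rcases haug.mem_one_two h2 with h1 | h1
  · obtain ⟨n', hA'⟩ := haug.exists_isProper_left_of_union hd h2 h1
    exact hA.2 ⟨s, n', f, hA'⟩
  · rw [Set.union_comm] at haug
    obtain ⟨n', hB'⟩ := haug.exists_isProper_left_of_union hd.symm h2 h1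
    exact hB.2 ⟨s, n', f, hB'⟩

end Union

def pathEdges (n : ℕ∞) (f : ℕ → V) : Set (Sym2 V) :=
  {e | ∃ i : ℕ, (i : ℕ∞) + 1 < n ∧ e = s(f i, f (i + 1))}

lemma IsPath.pathEdges_subset {G : SimpleGraph V} {n : ℕ∞} {f : ℕ → V} (hp : IsPath G n f) :
    pathEdges n f ⊆ G.edgeSet := by
  rintro _ ⟨i, hi, rfl⟩
  exact hp.2.2 i hi

namespace IsAugmentingPath

variable {G : SimpleGraph V} {M : Set (Sym2 V)} {n : ℕ∞} {f : ℕ → V} {s : V}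

lemma mem_pathEdges_of_mem (haug : IsAugmentingPath G M n f s) (hM : IsMatching G M) {j : ℕ}
    (hj : (j : ℕ∞) < n) {e : Sym2 V} (he : e ∈ M) (hje : f j ∈ e) : e ∈ pathEdges n f := by
  have ⟨_, _, _, hf0, hs, _⟩ := haug
  rcases j with _ | i
  · exact (hs ⟨e, he, hf0 ▸ hje⟩).elim
  have hi : (i : ℕ∞) + 1 < n := by exact_mod_cast hj
  rcases Nat.even_or_odd i with hi' | hi'
  · have hi1 := haug.add_one_lt_of_mem_supp hj ⟨e, he, hje⟩
    have hM1 := (haug.mem_iff_odd (i + 1) hi1).2 hi'.add_one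
    exact ⟨i + 1, hi1, hM.2 _ _ he _ hM1 hje (Sym2.mem_mk_left _ _)⟩
  · have hM1 := (haug.mem_iff_odd i hi).2 hi'
    exact ⟨i, hi, hM.2 _ _ he _ hM1 hje (Sym2.mem_mk_right _ _)⟩

lemma mem_symmDiff_of_even (haug : IsAugmentingPath G M n f s) {i : ℕ} (hi : (i : ℕ∞) + 1 < n)
    (heven : Even i) : s(f i, f (i + 1)) ∈ M ∆ pathEdges n f :=
  Set.mem_symmDiff.2 <| .inr ⟨⟨i, hi, rfl⟩,
    fun h => Nat.not_odd_iff_even.2 heven ((haug.mem_iff_odd i hi).1 h)⟩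

lemma mem_supp_symmDiff (haug : IsAugmentingPath G M n f s) {j : ℕ} (hj : (j : ℕ∞) < n) :
    f j ∈ supp (M ∆ pathEdges n f) := by
  have ⟨_, _, hn, _⟩ := haug
  rcases j with _ | i
  · exact ⟨_, haug.mem_symmDiff_of_even (by simpa using hn) Even.zero,
      Sym2.mem_mk_left _ _⟩
  have hi : (i : ℕ∞) + 1 < n := by exact_mod_cast hj
  rcases Nat.even_or_odd i with hi' | hi'
  · exact ⟨_, haug.mem_symmDiff_of_even hi hi', Sym2.mem_mk_right _ _⟩
  · have hi1 := haug.add_one_lt_of_mem_supp hj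
      ⟨_, (haug.mem_iff_odd i hi).2 hi', Sym2.mem_mk_right _ _⟩
    exact ⟨_, haug.mem_symmDiff_of_even hi1 hi'.add_one, Sym2.mem_mk_left _ _⟩

lemma supp_subset_supp_symmDiff (haug : IsAugmentingPath G M n f s) :
    supp M ⊆ supp (M ∆ pathEdges n f) := by
  rintro v ⟨e, he, hv⟩
  by_cases heP : e ∈ pathEdges n f
  · obtain ⟨i, hi, rfl⟩ := heP
    rcases Sym2.mem_iff.1 hv with rfl | rfl
    · exact haug.mem_supp_symmDiff (lt_of_le_of_lt le_self_add hi)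
    · exact haug.mem_supp_symmDiff (by exact_mod_cast hi)
  · exact ⟨e, Set.mem_symmDiff.2 (.inl ⟨he, heP⟩), hv⟩

theorem isMatching_symmDiff (haug : IsAugmentingPath G M n f s) (hM : IsMatching G M) :
    IsMatching G (M ∆ pathEdges n f) := by
  refine ⟨fun e he => ?_, fun v e he e' he' hv hv' => ?_⟩
  · rcases Set.mem_symmDiff.1 he with ⟨he, -⟩ | ⟨he, -⟩
    exacts [hM.1 he, haug.1.pathEdges_subset he]
  -- an `M`-edge at a vertex of the path is an edge of the path
  have mixed : ∀ {e e'}, e ∈ M → e ∉ pathEdges n f → e' ∈ pathEdges n f → v ∈ e → v ∈ e' →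
      False := by
    rintro e _ heM heP ⟨j, hj, rfl⟩ hv hv'
    rcases Sym2.mem_iff.1 hv' with rfl | rfl
    · exact heP (haug.mem_pathEdges_of_mem hM (lt_of_le_of_lt le_self_add hj) heM hv)
    · exact heP (haug.mem_pathEdges_of_mem hM (by exact_mod_cast hj) heM hv)
  rcases Set.mem_symmDiff.1 he with ⟨heM, heP⟩ | ⟨heP, heM⟩ <;>
    rcases Set.mem_symmDiff.1 he' with ⟨heM', heP'⟩ | ⟨heP', heM'⟩
  · exact hM.2 v e heM e' heM' hv hv'
  · exact (mixed heM heP heP' hv hv').elim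
  · exact (mixed heM' heP' heP hv' hv).elim
  · -- two non-`M` edges of the path have even indices, so they cannot be consecutive
    obtain ⟨a, ha, rfl⟩ := heP
    obtain ⟨b, hb, rfl⟩ := heP'
    have ha' : ¬Odd a := fun h => heM ((haug.mem_iff_odd a ha).2 h)
    have hb' : ¬Odd b := fun h => heM' ((haug.mem_iff_odd b hb).2 h)
    rcases haug.1.eq_or_succ_of_edges_meet ha hb hv hv' with rfl | rfl | rfl
    · rfl
    · exact (ha' (Nat.odd_add_one.2 hb')).elim
    · exact (hb' (Nat.odd_add_one.2 ha')).elim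

end IsAugmentingPath

section AltWalk

def alternate (A B : Set (Sym2 V)) (i : ℕ) : Set (Sym2 V) := if Even i then A else B

noncomputable def altWalk (A B : Set (Sym2 V)) (s : V) : ℕ → V
  | 0 => s
  | i + 1 => partner (alternate A B i) (altWalk A B s i)

variable {G : SimpleGraph V} {A B : Set (Sym2 V)} {s : V} {n : ℕ∞}

lemma alternate_congr {i j : ℕ} (h : Even i ↔ Even j) : alternate A B i = alternate A B j := by
  simp only [alternate, h]

lemma alternate_of_odd {i : ℕ} (h : Odd i) : alternate A B i = B :=
  if_neg (Nat.not_even_iff_odd.2 h)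

lemma isMatching_alternate (hA : IsMatching G A) (hB : IsMatching G B) (i : ℕ) :
    IsMatching G (alternate A B i) := by
  unfold alternate; split_ifs <;> assumption

lemma altWalk_succ_mem {i : ℕ} (h : altWalk A B s i ∈ supp (alternate A B i)) :
    s(altWalk A B s i, altWalk A B s (i + 1)) ∈ alternate A B i :=
  partner_mem h

variable (hA : IsMatching G A) (hB : IsMatching G B) (hBA : supp B ⊆ supp A) (hsA : s ∈ supp A)
  (hsB : s ∉ supp B)
  (halive : ∀ j : ℕ, Odd j → (j : ℕ∞) + 1 < n → altWalk A B s j ∈ supp B)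
include hBA hsA halive

lemma altWalk_mem_alternate {i : ℕ} (hi : (i : ℕ∞) + 1 < n) :
    s(altWalk A B s i, altWalk A B s (i + 1)) ∈ alternate A B i := by
  refine altWalk_succ_mem ?_
  rcases Nat.even_or_odd i with hi' | hi'
  · rw [alternate, if_pos hi']
    rcases i with _ | j
    · exact hsA
    · have hj : Odd j := Nat.not_even_iff_odd.1 (Nat.even_add_one.1 hi')
      have hjB := altWalk_succ_mem (i := j) <| by
        rw [alternate_of_odd hj]
        exact halive j hj
          (natCast_add_one_lt_of_lt j.lt_succ_self (lt_of_le_of_lt le_self_add hi))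
      rw [alternate_of_odd hj] at hjB
      exact hBA ⟨_, hjB, Sym2.mem_mk_right _ _⟩
  · rw [alternate_of_odd hi']
    exact halive i hi' hi

include hA hB hsB

/-- Walking backwards along the walk is again taking partners, so a first repeated vertex would
force an earlier repetition. -/
lemma altWalk_injOn {i j : ℕ} (hi : (i : ℕ∞) < n) (hj : (j : ℕ∞) < n)
    (h : altWalk A B s i = altWalk A B s j) : i = j := by
  have edge := fun (i : ℕ) (hi : (i : ℕ∞) + 1 < n) => altWalk_mem_alternate hBA hsA halive hi
  have hmatch := isMatching_alternate hA hB
  set g := altWalk A B s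
  suffices key : ∀ j : ℕ, (j : ℕ∞) < n → ∀ i < j, g i ≠ g j by
    rcases lt_trichotomy i j with hij | rfl | hij
    exacts [(key j hj i hij h).elim, rfl, (key i hi j hij h.symm).elim]
  intro j
  induction j using Nat.strong_induction_on with | _ j ih => ?_
  intro hj i hij hgij
  obtain ⟨p, rfl⟩ : ∃ p, j = p + 1 := ⟨j - 1, by omega⟩
  have hp := edge p (by exact_mod_cast hj)
  rw [Sym2.eq_swap] at hp
  by_cases hpar : Even i ↔ Even p
  · have hi := edge i (natCast_add_one_lt_of_lt hij hj)
    rw [hgij, alternate_congr hpar] at hi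
    have hip : g (i + 1) = g p := (hmatch p).eq_of_mem_of_mem hi hp
    rcases (by omega : i = p ∨ i + 1 < p ∨ i + 1 = p) with rfl | hlt | rfl
    · exact (hmatch i).ne_of_mem hi rfl
    · exact ih p p.lt_succ_self (natCast_lt_of_le p.le_succ hj) _ hlt hip
    · rw [Nat.even_add_one] at hpar
      tauto
  · rcases i with _ | q
    · rw [alternate_of_odd (Nat.not_even_iff_odd.1 fun h => hpar (iff_of_true Even.zero h))] at hp
      exact hsB ⟨_, hp, hgij ▸ Sym2.mem_mk_left _ _⟩
    · have hq := edge q (natCast_add_one_lt_of_lt (by omega) hj)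
      have hqp : Even q ↔ Even p := by
        rw [Nat.even_add_one] at hpar
        tauto
      rw [Sym2.eq_swap, hgij, alternate_congr hqp] at hq
      exact ih p p.lt_succ_self (natCast_lt_of_le p.le_succ hj) q (by omega)
        ((hmatch p).eq_of_mem_of_mem hq hp)

lemma altWalk_mem_iff_odd {i : ℕ} (hi : (i : ℕ∞) + 1 < n) :
    s(altWalk A B s i, altWalk A B s (i + 1)) ∈ B ↔ Odd i := by
  refine ⟨fun h => ?_, fun h => ?_⟩
  · by_contra hodd
    rcases i with _ | j
    · exact hsB ⟨_, h, Sym2.mem_mk_left _ _⟩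
    have hj : Odd j := by rwa [Nat.odd_add_one, not_not] at hodd
    have hjn : (j : ℕ∞) + 1 < n := natCast_add_one_lt_of_lt j.lt_succ_self
      (lt_of_le_of_lt le_self_add hi)
    have hjB := altWalk_mem_alternate hBA hsA halive hjn
    rw [alternate_of_odd hj, Sym2.eq_swap] at hjB
    have := altWalk_injOn hA hB hBA hsA hsB halive (lt_of_le_of_lt le_self_add hjn)
      (by exact_mod_cast hi) (hB.eq_of_mem_of_mem hjB h)
    omega
  · have := altWalk_mem_alternate hBA hsA halive hi
    rwa [alternate_of_odd h] at this

lemma isAugmentingPath_altWalk (hn : 1 < n)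
    (hend : ∀ k : ℕ, n = (k : ℕ∞) + 1 → altWalk A B s k ∉ supp B) :
    IsAugmentingPath G B n (altWalk A B s) s :=
  isAugmentingPath_of_parity
    ⟨hn.le, fun _ _ hi hj => altWalk_injOn hA hB hBA hsA hsB halive hi hj,
      fun i hi => (isMatching_alternate hA hB i).1 (altWalk_mem_alternate hBA hsA halive hi)⟩
    hn hsB hend fun _ hi => altWalk_mem_iff_odd hA hB hBA hsA hsB halive hi

end AltWalk

theorem exists_isAugmentingPath_isProper_of_supp_subset {G : SimpleGraph V}
    {A B : Set (Sym2 V)} {s t : V}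
    (hA : IsMatching G A) (hB : IsMatching G B) (hBA : supp B ⊆ supp A) (hsB : s ∉ supp B)
    (hst : s(s, t) ∈ A) (ht : t ∈ supp B) :
    ∃ n f, IsAugmentingPath G B n f s ∧ IsProper B n f := by
  classical
  have hsA : s ∈ supp A := ⟨_, hst, Sym2.mem_mk_left _ _⟩
  have hg1 : altWalk A B s 1 = t := by
    rw [altWalk, alternate, if_pos Even.zero]
    exact hA.partner_eq hst
  by_cases H : ∃ j, Odd j ∧ altWalk A B s j ∉ supp B
  · obtain ⟨hk, hkB⟩ := Nat.find_spec H
    set k := Nat.find H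
    have hk1 : k ≠ 1 := fun h => hkB (by rwa [h, hg1])
    have hk2 : (2 : ℕ∞) < k + 1 := by exact_mod_cast (by have := hk.pos; omega : 2 < k + 1)
    have haug := isAugmentingPath_altWalk hA hB hBA hsA hsB (n := k + 1)
      (fun j hj hjk => by
        have : j + 1 < k + 1 := by exact_mod_cast hjk
        exact not_not.1 fun h => Nat.find_min H (by omega) ⟨hj, h⟩)
      (lt_trans (by norm_num) hk2) (fun j hj => by
        obtain rfl : j = k := by
          have : k + 1 = j + 1 := by exact_mod_cast hj
          omega
        exact hkB)
    exact ⟨_, _, haug, haug.isProper_iff.2 hk2⟩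
  · push Not at H
    have haug := isAugmentingPath_altWalk hA hB hBA hsA hsB (n := ⊤)
      (fun j hj _ => H j hj) ENat.one_lt_top
      (fun k hk => absurd hk (by exact_mod_cast ENat.top_ne_natCast (k + 1)))
    exact ⟨_, _, haug, haug.isProper_iff.2 (by exact_mod_cast WithTop.natCast_lt_top 2)⟩

theorem IndepMatching.of_supp_eq {G : SimpleGraph V} {M M' : Set (Sym2 V)}
    (hM : IsMatching G M) (hM' : IndepMatching G M') (h : supp M = supp M') :
    IndepMatching G M := by
  refine ⟨hM, fun ⟨s, n, f, haug, hprop⟩ => hM'.2 ⟨s, ?_⟩⟩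
  have ⟨_, _, hn, hf0, hs, _⟩ := haug
  have hs0 : s(s, f 1) ∈ M ∆ pathEdges n f :=
    hf0 ▸ haug.mem_symmDiff_of_even (by simpa using hn) Even.zero
  have hf1 : f 1 ∈ supp M :=
    ⟨_, haug.mem_one_two (haug.isProper_iff.1 hprop), Sym2.mem_mk_left _ _⟩
  exact exists_isAugmentingPath_isProper_of_supp_subset (haug.isMatching_symmDiff hM) hM'.1
    (h ▸ haug.supp_subset_supp_symmDiff) (h ▸ hs) hs0 (h ▸ hf1)

theorem indepSubgraph_union_of_disjoint_general {V : Type*} (G : SimpleGraph V)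
    (W1 W2 : Set V) (hdisj : Disjoint W1 W2)
    (h1 : IndepSubgraph G W1) (h2 : IndepSubgraph G W2) :
    IndepSubgraph G (W1 ∪ W2) := by
  obtain ⟨⟨M1, hM1, rfl⟩, hind1⟩ := h1
  obtain ⟨⟨M2, hM2, rfl⟩, hind2⟩ := h2
  refine ⟨⟨M1 ∪ M2, hM1.union hM2 hdisj, supp_union M1 M2⟩, fun M hM hsupp => ?_⟩
  exact ((hind1 M1 hM1 rfl).union (hind2 M2 hM2 rfl) hdisj).of_supp_eq hM
    (hsupp.trans (supp_union M1 M2).symm)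

/-- The union of two disjoint independent subgraphs is independent. -/
theorem indepSubgraph_union_of_disjoint {V : Type*} [Countable V] (G : SimpleGraph V)
    (W1 W2 : Set V) (hdisj : Disjoint W1 W2)
    (h1 : IndepSubgraph G W1) (h2 : IndepSubgraph G W2) :
    IndepSubgraph G (W1 ∪ W2) :=
  indepSubgraph_union_of_disjoint_general G W1 W2 hdisj h1 h2

end PaperMatchings
end

section
/- Let G be a simple graph on a countable vertex set, and let (M_i)_{i ∈ ℕ} be a chain of independent matchings of G with M_i ⊆ M_{i+1} for all i. Then the union M* = ⋃_{i ∈ ℕ} M_i is an independent matching of G. -/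
namespace PaperMatchings

variable {V : Type*}

/-!
Since the chain is directed, its union `M*` is again a matching. Along a proper `M*`-augmenting
path the edges in `M*` are exactly the odd-numbered ones, so its second edge lies in `M*`, hence
in some `Mᵢ`. Cutting the path just before its first odd-numbered edge outside `Mᵢ` (or not at
all, if there is none) leaves a proper `Mᵢ`-augmenting path: the new endpoint is covered in `M*`
only by that edge, which is not in `Mᵢ`. This contradicts the independence of `Mᵢ`.
-/

section

variable {G : SimpleGraph V} {M N : Set (Sym2 V)} {n m : ℕ∞} {f : ℕ → V} {s : V}

theorem supp_mono (h : N ⊆ M) : supp N ⊆ supp M := fun _ ⟨e, he, hv⟩ => ⟨e, h he, hv⟩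

theorem IsMatching.notMem_supp_of_subset (hM : IsMatching G M) (hNM : N ⊆ M) {e : Sym2 V}
    (heM : e ∈ M) (heN : e ∉ N) {v : V} (hv : v ∈ e) : v ∉ supp N := by
  rintro ⟨e', he', hv'⟩
  rw [hM.2 v e' (hNM he') e heM hv' hv] at he'
  exact heN he'

theorem isMatching_iUnion {ι : Type*} {M : ι → Set (Sym2 V)} (hdir : Directed (· ⊆ ·) M)
    (hM : ∀ i, IsMatching G (M i)) : IsMatching G (⋃ i, M i) := by
  refine ⟨Set.iUnion_subset fun i => (hM i).1, fun v e he e' he' hv hv' => ?_⟩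
  obtain ⟨a, ha⟩ := Set.mem_iUnion.mp he
  obtain ⟨b, hb⟩ := Set.mem_iUnion.mp he'
  obtain ⟨c, hac, hbc⟩ := hdir a b
  exact (hM c).2 v e (hac ha) e' (hbc hb) hv hv'

theorem IsPath.mono_s19 (hf : IsPath G n f) (hm : 1 ≤ m) (hmn : m ≤ n) : IsPath G m f :=
  ⟨hm, fun i j hi hj => hf.2.1 i j (hi.trans_le hmn) (hj.trans_le hmn),
    fun i hi => hf.2.2 i (hi.trans_le hmn)⟩

theorem isAlternating_of_mem_iff_odd
    (h : ∀ j : ℕ, (j : ℕ∞) + 1 < m → (s(f j, f (j + 1)) ∈ M ↔ Odd j)) :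
    IsAlternating M m f := by
  intro i hi
  have hi₁ : (i : ℕ∞) + 1 < m := lt_of_le_of_lt (by gcongr; norm_num) hi
  have hi₂ : ((i + 1 : ℕ) : ℕ∞) + 1 < m := by push_cast; rwa [add_assoc, one_add_one_eq_two]
  rw [h i hi₁, h (i + 1) hi₂, Nat.odd_add_one, not_not]

theorem IsAugmentingPath.mem_iff_odd_s19 (hf : IsAugmentingPath G M n f s) :
    ∀ j : ℕ, (j : ℕ∞) + 1 < n → (s(f j, f (j + 1)) ∈ M ↔ Odd j) := by
  obtain ⟨-, halt, -, hf0, hs, -⟩ := hf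
  intro j
  induction j with
  | zero =>
    intro _
    have : s(f 0, f 1) ∉ M := fun h => hs ⟨_, h, hf0 ▸ Sym2.mem_mk_left _ _⟩
    simpa using this
  | succ j ih =>
    intro hj
    have hj' : (j : ℕ∞) + 1 < n := lt_of_le_of_lt (by gcongr; simp) hj
    have hj₂ : (j : ℕ∞) + 2 < n := by push_cast at hj; rwa [add_assoc, one_add_one_eq_two] at hj
    rw [Nat.odd_add_one, ← ih hj', halt j hj₂, not_not]

theorem IsAugmentingPath.second_edge_mem (hf : IsAugmentingPath G M n f s)
    (hp : IsProper M n f) : (1 : ℕ∞) + 1 < n ∧ s(f 1, f 2) ∈ M := by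
  obtain ⟨i, hi, hiM⟩ := hp
  have hi1 : 1 ≤ i := ((hf.mem_iff_odd_s19 i hi).mp hiM).pos
  have h2 : (1 : ℕ∞) + 1 < n := lt_of_le_of_lt (by gcongr; exact_mod_cast hi1) hi
  exact ⟨h2, (hf.mem_iff_odd_s19 1 (by exact_mod_cast h2)).mpr odd_one⟩

theorem IsAugmentingPath.prefix (hf : IsAugmentingPath G M n f s) (hNM : N ⊆ M) (hm : 1 < m)
    (hmn : m ≤ n) (hpar : ∀ j : ℕ, (j : ℕ∞) + 1 < m → (s(f j, f (j + 1)) ∈ N ↔ Odd j))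
    (hend : ∀ k : ℕ, m = (k : ℕ∞) + 1 → f k ∉ supp N) : IsAugmentingPath G N m f s := by
  obtain ⟨hpath, -, -, hf0, hs, -⟩ := hf
  exact ⟨hpath.mono_s19 hm.le hmn, isAlternating_of_mem_iff_odd hpar, hm, hf0,
    fun h => hs (supp_mono hNM h), hend⟩

theorem exists_proper_augmentingPath_of_subset (hM : IsMatching G M) (hNM : N ⊆ M)
    (hf : IsAugmentingPath G M n f s) (h2 : (1 : ℕ∞) + 1 < n) (h1N : s(f 1, f 2) ∈ N) :
    ∃ m : ℕ∞, IsAugmentingPath G N m f s ∧ IsProper N m f := by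
  classical
  have hparN : ∀ j : ℕ, (j : ℕ∞) + 1 < n → (Odd j → s(f j, f (j + 1)) ∈ N) →
      (s(f j, f (j + 1)) ∈ N ↔ Odd j) := fun j hj hodd =>
    ⟨fun h => (hf.mem_iff_odd_s19 j hj).mp (hNM h), hodd⟩
  by_cases hbad : ∃ j : ℕ, Odd j ∧ (j : ℕ∞) + 1 < n ∧ s(f j, f (j + 1)) ∉ N
  · obtain ⟨hjodd, hjn, hjN⟩ := Nat.find_spec hbad
    set j := Nat.find hbad
    have hlt : ∀ k < j, (k : ℕ∞) + 1 < n := fun k hk => lt_of_le_of_lt (by gcongr) hjn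
    have hj3 : 1 + 1 < j + 1 := by
      obtain ⟨r, hr⟩ := hjodd
      have : j ≠ 1 := by rintro h; rw [h] at hjN; exact hjN h1N
      omega
    have hm2 : (1 : ℕ∞) + 1 < (j : ℕ∞) + 1 := by exact_mod_cast hj3
    refine ⟨(j : ℕ∞) + 1, hf.prefix hNM (lt_trans (by norm_num) hm2) hjn.le ?_ ?_,
      1, by exact_mod_cast hm2, h1N⟩
    · intro k hk
      have hkj : k < j := by
        have : k + 1 < j + 1 := by exact_mod_cast hk
        omega
      refine hparN k (hlt k hkj) fun ho => ?_
      by_contra hkN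
      exact Nat.find_min hbad hkj ⟨ho, hlt k hkj, hkN⟩
    · intro k hk
      obtain rfl : k = j := by
        have : j + 1 = k + 1 := by exact_mod_cast hk
        omega
      exact hM.notMem_supp_of_subset hNM ((hf.mem_iff_odd_s19 j hjn).mpr hjodd) hjN
        (Sym2.mem_mk_left _ _)
  · push Not at hbad
    refine ⟨n, hf.prefix hNM hf.2.2.1 le_rfl ?_ ?_, 1, by exact_mod_cast h2, h1N⟩
    · exact fun k hk => hparN k hk (hbad k · hk)
    · exact fun k hk h => hf.2.2.2.2.2 k hk (supp_mono hNM h)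

end

theorem iUnion_chain_indep_matching_general {V : Type*} (G : SimpleGraph V)
    (M : ℕ → Set (Sym2 V)) (hind : ∀ i : ℕ, IndepMatching G (M i))
    (hchain : ∀ i : ℕ, M i ⊆ M (i + 1)) :
    IndepMatching G (⋃ i : ℕ, M i) := by
  have hmatch : IsMatching G (⋃ i, M i) :=
    isMatching_iUnion (monotone_nat_of_le_succ hchain).directed_le fun i => (hind i).1
  refine ⟨hmatch, ?_⟩
  rintro ⟨s, n, f, hf, hproper⟩
  obtain ⟨h2, h1⟩ := hf.second_edge_mem hproper
  obtain ⟨i, h1i⟩ := Set.mem_iUnion.mp h1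
  obtain ⟨m, hfi, hproperi⟩ :=
    exists_proper_augmentingPath_of_subset hmatch (Set.subset_iUnion M i) hf h2 h1i
  exact (hind i).2 ⟨s, m, f, hfi, hproperi⟩

/-- The union of an increasing chain of independent matchings is an
independent matching. -/
theorem iUnion_chain_indep_matching {V : Type*} [Countable V] (G : SimpleGraph V)
    (M : ℕ → Set (Sym2 V)) (hind : ∀ i : ℕ, IndepMatching G (M i))
    (hchain : ∀ i : ℕ, M i ⊆ M (i + 1)) :
    IndepMatching G (⋃ i : ℕ, M i) :=
  iUnion_chain_indep_matching_general G M hind hchain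

end PaperMatchings
end
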